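/- The lattice T_δ(ℤ^d) with δ = √(d+1) is isometric (as a metric space with the Euclidean metric) to the root lattice A_d = {x ∈ ℤ^{d+1} : Σᵢ xᵢ = 0}. -/

import Mathlib

open Finset

/-!
`T_δ` stretches the diagonal direction `𝟙` by `δ` and fixes its orthogonal complement, so
`‖T_δ x‖² = ‖x‖² + (δ² - 1) (∑ xⱼ)² / d`. For `δ = √(d+1)` this is `‖x‖² + (∑ xⱼ)²`, the squared
norm of `(x, -∑ xⱼ)`; and `x ↦ (x, -∑ xⱼ)` maps `ℤ^d` onto `A_d`. Hence `T_δ(ℤ^d)` and `A_d` are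
images of `ℤ^d` under two linear maps with the same pairwise distances.
-/

/-- The map `T_δ` of the paper. -/
noncomputable def diagStretch (δ : ℝ) (d : ℕ) :
    EuclideanSpace ℝ (Fin d) →ₗ[ℝ] EuclideanSpace ℝ (Fin d) where
  toFun x := WithLp.toLp 2 fun k => x k - (1 - δ) / d * ∑ j, x j
  map_add' x y := by ext k; simp only [PiLp.add_apply, sum_add_distrib]; ring
  map_smul' c x := by ext k; simp [← mul_sum]; ring

noncomputable def snocNegSum (d : ℕ) :
    EuclideanSpace ℝ (Fin d) →ₗ[ℝ] EuclideanSpace ℝ (Fin (d + 1)) where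
  toFun x := WithLp.toLp 2 (Fin.snoc (x : Fin d → ℝ) (-∑ j, x j))
  map_add' x y := by
    ext k
    refine Fin.lastCases ?_ (fun i => ?_) k
    · simp [sum_add_distrib]; ring
    · simp
  map_smul' c x := by ext k; refine Fin.lastCases ?_ (fun i => ?_) k <;> simp [← mul_sum]

theorem norm_sq_diagStretch (δ : ℝ) {d : ℕ} (x : EuclideanSpace ℝ (Fin d)) :
    ‖diagStretch δ d x‖ ^ 2 = ‖x‖ ^ 2 + (δ ^ 2 - 1) / d * (∑ j, x j) ^ 2 := by
  obtain rfl | hd := eq_or_ne d 0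
  · simp [EuclideanSpace.real_norm_sq_eq]
  simp only [EuclideanSpace.real_norm_sq_eq, diagStretch, LinearMap.coe_mk, AddHom.coe_mk, sub_sq,
    sum_add_distrib, sum_sub_distrib, ← mul_sum, ← sum_mul, sum_const, card_univ,
    Fintype.card_fin, nsmul_eq_mul]
  field_simp
  ring

theorem norm_sq_snocNegSum {d : ℕ} (x : EuclideanSpace ℝ (Fin d)) :
    ‖snocNegSum d x‖ ^ 2 = ‖x‖ ^ 2 + (∑ j, x j) ^ 2 := by
  simp [EuclideanSpace.real_norm_sq_eq, snocNegSum, Fin.sum_univ_castSucc]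

theorem norm_diagStretch_sqrt {d : ℕ} (hd : d ≠ 0) (x : EuclideanSpace ℝ (Fin d)) :
    ‖diagStretch √(d + 1) d x‖ = ‖snocNegSum d x‖ := by
  rw [← sq_eq_sq₀ (norm_nonneg _) (norm_nonneg _), norm_sq_diagStretch, norm_sq_snocNegSum,
    Real.sq_sqrt (by positivity), add_sub_cancel_right, div_self (by exact_mod_cast hd), one_mul]

theorem dist_diagStretch_sqrt {d : ℕ} (hd : d ≠ 0) (x y : EuclideanSpace ℝ (Fin d)) :
    dist (diagStretch √(d + 1) d x) (diagStretch √(d + 1) d y) =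
      dist (snocNegSum d x) (snocNegSum d y) := by
  rw [dist_eq_norm, dist_eq_norm, ← map_sub, ← map_sub, norm_diagStretch_sqrt hd]

theorem nonempty_isometryEquiv_range_of_dist_eq {ι α β : Type*} [MetricSpace α] [MetricSpace β]
    {f : ι → α} {g : ι → β} (h : ∀ i j, dist (f i) (f j) = dist (g i) (g j)) :
    Nonempty (Set.range f ≃ᵢ Set.range g) := by
  have transfer : ∀ {i j}, f i = f j → g i = g j := fun hij =>
    dist_eq_zero.1 (by rw [← h, hij, dist_self])
  let φ : Set.range f → Set.range g := fun p => ⟨g p.2.choose, Set.mem_range_self _⟩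
  let ψ : Set.range g → Set.range f := fun q => ⟨f q.2.choose, Set.mem_range_self _⟩
  refine ⟨IsometryEquiv.mk' φ ψ (fun q => ?_) (Isometry.of_dist_eq fun p q => ?_)⟩
  · ext
    exact (transfer (ψ q).2.choose_spec).trans q.2.choose_spec
  · rw [Subtype.dist_eq, Subtype.dist_eq, ← h, p.2.choose_spec, q.2.choose_spec]

theorem range_snocNegSum_intCast (d : ℕ) :
    Set.range (fun X : Fin d → ℤ => snocNegSum d (WithLp.toLp 2 fun k => (X k : ℝ))) =
      {y | (∃ X : Fin (d + 1) → ℤ, ∀ k, y k = (X k : ℝ)) ∧ ∑ k, y k = 0} := by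
  ext y
  constructor
  · rintro ⟨X, rfl⟩
    refine ⟨⟨Fin.snoc X (-∑ j, X j), fun k => ?_⟩, ?_⟩
    · refine Fin.lastCases ?_ (fun i => ?_) k <;> simp [snocNegSum]
    · simp [snocNegSum, Fin.sum_univ_castSucc]
  · rintro ⟨⟨X, hX⟩, hy⟩
    have hlast : y (Fin.last d) = -∑ i : Fin d, (X i.castSucc : ℝ) := by
      rw [Fin.sum_univ_castSucc] at hy
      simp only [hX] at hy ⊢
      linarith
    refine ⟨fun k => X k.castSucc, ?_⟩
    ext k
    refine Fin.lastCases ?_ (fun i => ?_) k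
    · simp [snocNegSum, hlast]
    · simp [snocNegSum, hX]

theorem stmt_3 (d : ℕ) (hd : 0 < d) :
    let γ : ℝ := Real.sqrt (d + 1)
    let L : Set (EuclideanSpace ℝ (Fin d)) :=
      {y | ∃ X : Fin d → ℤ, ∀ k, y k = (X k : ℝ) - ((1 - γ) / d) * ∑ j, (X j : ℝ)}
    let A : Set (EuclideanSpace ℝ (Fin (d + 1))) :=
      {y | (∃ X : Fin (d + 1) → ℤ, ∀ k, y k = (X k : ℝ)) ∧ ∑ k, y k = 0}
    Nonempty (L ≃ᵢ A) := by
  intro γ L A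
  let intVec (X : Fin d → ℤ) : EuclideanSpace ℝ (Fin d) := WithLp.toLp 2 fun k => (X k : ℝ)
  have hL : L = Set.range fun X => diagStretch γ d (intVec X) := by
    ext y
    simp [L, diagStretch, intVec, PiLp.ext_iff, eq_comm]
  have hA : A = Set.range fun X => snocNegSum d (intVec X) := (range_snocNegSum_intCast d).symm
  rw [hL, hA]
  exact nonempty_isometryEquiv_range_of_dist_eq fun X Y =>
    dist_diagStretch_sqrt hd.ne' (intVec X) (intVec Y)
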